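/- arXiv:math/0611253 — 2 statements merged into one kernel-verified Lean document; each statement's English description precedes it below -/
import Mathlib

section
/- Let κ > 0 and 0 < R₁ ≤ R₂. Suppose a, φ, d, r are real numbers with sinh(κR₁)/sinh(κR₂) ≤ a ≤ 1, |φ| ≤ 1, r ≥ R₁, and d² ≤ (1 − φ²) κ² sinh(κr)⁻² (1 − a²). Let μ = (1/sinh(κR₁)) · √(sinh²(κR₂)/sinh²(κR₁) − 1). Then μ · κ · a ≥ |d|. -/
open Real

set_option maxHeartbeats 1600000 in
private lemma aux_arith (s₁ s₂ sr κ a φ d μ : ℝ) (hs₁ : 0 < s₁) (hs₂ : s₁ ≤ s₂)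
    (hsr : s₁ ≤ sr) (hκ : 0 < κ) (has : s₁ ≤ a * s₂) (ha₂ : a ≤ 1) (hφ : |φ| ≤ 1)
    (hd : d^2 ≤ (1 - φ^2) * κ^2 * (sr⁻¹)^2 * (1 - a^2))
    (hμ : μ = (1 / s₁) * Real.sqrt (s₂^2 / s₁^2 - 1)) :
    |d| ≤ μ * κ * a := by
  have hs₂pos : 0 < s₂ := lt_of_lt_of_le hs₁ hs₂
  have hsrpos : 0 < sr := lt_of_lt_of_le hs₁ hsr
  have hapos : 0 < a := by nlinarith
  have hX : 0 ≤ s₂^2 / s₁^2 - 1 := by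
    rw [sub_nonneg, le_div_iff₀ (by positivity)]
    nlinarith
  have hμ0 : 0 ≤ μ := by rw [hμ]; positivity
  have hμsq : μ^2 = (1 / s₁^2) * (s₂^2 / s₁^2 - 1) := by
    rw [hμ, mul_pow, Real.sq_sqrt hX]; ring
  have hφ2 : φ^2 ≤ 1 := by nlinarith [abs_nonneg φ, sq_abs φ]
  have ha2 : a^2 ≤ 1 := by nlinarith
  have hinv : sr⁻¹ ≤ s₁⁻¹ := inv_anti₀ hs₁ hsr
  have hinvpos : 0 < sr⁻¹ := by positivity
  have hinv1pos : 0 < s₁⁻¹ := by positivity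
  have h1 : d^2 ≤ κ^2 * (s₁⁻¹)^2 * (1 - a^2) := by
    have hu2 : (sr⁻¹)^2 ≤ (s₁⁻¹)^2 := pow_le_pow_left₀ hinvpos.le hinv 2
    have h0 : (1 - φ^2) * (sr⁻¹)^2 ≤ (s₁⁻¹)^2 := by
      nlinarith [mul_nonneg (sq_nonneg φ) (sq_nonneg sr⁻¹)]
    have h1ma : (0:ℝ) ≤ 1 - a^2 := by linarith
    have h1a := mul_le_mul_of_nonneg_right
      (mul_le_mul_of_nonneg_left h0 (sq_nonneg κ)) h1ma
    linarith [h1a, hd]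
  have h2 : κ^2 * (s₁⁻¹)^2 * (1 - a^2) ≤ (μ * κ * a)^2 := by
    have key : 1 - a^2 ≤ a^2 * (s₂^2 / s₁^2 - 1) := by
      have h1' : (1:ℝ) ≤ a^2 * s₂^2 / s₁^2 := by
        rw [le_div_iff₀ (by positivity)]
        nlinarith [mul_le_mul has has hs₁.le (le_trans hs₁.le has)]
      have heq : a^2 * (s₂^2 / s₁^2 - 1) = a^2 * s₂^2 / s₁^2 - a^2 := by ring
      rw [heq]; linarith
    have hexp : (μ * κ * a)^2 = κ^2 * (s₁⁻¹)^2 * (a^2 * (s₂^2 / s₁^2 - 1)) := by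
      rw [show (μ * κ * a)^2 = μ^2 * (κ^2 * a^2) by ring, hμsq, one_div, ← inv_pow]
      ring
    rw [hexp]
    have := mul_le_mul_of_nonneg_left key
      (by positivity : (0:ℝ) ≤ κ^2 * (s₁⁻¹)^2)
    linarith [this]
  have hsq : d^2 ≤ (μ * κ * a)^2 := le_trans h1 h2
  have h := Real.sqrt_le_sqrt hsq
  rwa [Real.sqrt_sq_eq_abs, Real.sqrt_sq (by positivity)] at h

theorem stmt_6 (κ R₁ R₂ a φ d r μ : ℝ) (hκ : 0 < κ) (hR₁ : 0 < R₁) (hR : R₁ ≤ R₂)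
    (ha₁ : Real.sinh (κ * R₁) / Real.sinh (κ * R₂) ≤ a) (ha₂ : a ≤ 1)
    (hφ : |φ| ≤ 1) (hr : R₁ ≤ r)
    (hd : d^2 ≤ (1 - φ^2) * κ^2 * ((Real.sinh (κ * r))⁻¹)^2 * (1 - a^2))
    (hμ : μ = (1 / Real.sinh (κ * R₁)) *
      Real.sqrt ((Real.sinh (κ * R₂))^2 / (Real.sinh (κ * R₁))^2 - 1)) :
    |d| ≤ μ * κ * a := by
  have hs₁ : 0 < Real.sinh (κ * R₁) := Real.sinh_pos_iff.2 (by positivity)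
  have hs₂ : Real.sinh (κ * R₁) ≤ Real.sinh (κ * R₂) :=
    Real.sinh_le_sinh.2 (by nlinarith)
  have hsr : Real.sinh (κ * R₁) ≤ Real.sinh (κ * r) :=
    Real.sinh_le_sinh.2 (by nlinarith)
  have hs₂pos : 0 < Real.sinh (κ * R₂) := lt_of_lt_of_le hs₁ hs₂
  have has : Real.sinh (κ * R₁) ≤ a * Real.sinh (κ * R₂) := by
    rwa [div_le_iff₀ hs₂pos] at ha₁
  exact aux_arith (Real.sinh (κ * R₁)) (Real.sinh (κ * R₂)) (Real.sinh (κ * r))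
    κ a φ d μ hs₁ hs₂ hsr hκ has ha₂ hφ hd hμ
end

section
/- Let κ > 0 and 0 < R₁ ≤ R₂. Set μ = (1/sinh(κR₁))√(sinh²(κR₂)/sinh²(κR₁) − 1) and α = coth(κR₁) + μ. Let λ₁, λ₂ > 0, r ≥ R₁, φ, a, d ∈ ℝ with |φ| ≤ 1, sinh(κR₁)/sinh(κR₂) ≤ a ≤ 1, and |d| ≤ μκa. Then α[λ₁λ₂ cosh(κr) + κ(λ₁+λ₂) sinh(κr) a] ≥ λ₁λ₂ φ sinh(κr) + κ(λ₁+λ₂)(φ cosh(κr) a + κ⁻¹ sinh(κr) d). -/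
open Real

theorem stmt_7 (κ R₁ R₂ μ α lam₁ lam₂ r φ a d : ℝ) (hκ : 0 < κ)
    (hR₁ : 0 < R₁) (hR : R₁ ≤ R₂)
    (hμ : μ = (1 / Real.sinh (κ * R₁)) *
      Real.sqrt ((Real.sinh (κ * R₂))^2 / (Real.sinh (κ * R₁))^2 - 1))
    (hα : α = Real.cosh (κ * R₁) / Real.sinh (κ * R₁) + μ)
    (hl₁ : 0 < lam₁) (hl₂ : 0 < lam₂) (hr : R₁ ≤ r)
    (hφ : |φ| ≤ 1)
    (ha₁ : Real.sinh (κ * R₁) / Real.sinh (κ * R₂) ≤ a) (ha₂ : a ≤ 1)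
    (hd : |d| ≤ μ * κ * a) :
    lam₁ * lam₂ * φ * Real.sinh (κ * r)
      + κ * (lam₁ + lam₂) * (φ * Real.cosh (κ * r) * a + κ⁻¹ * Real.sinh (κ * r) * d)
    ≤ α * (lam₁ * lam₂ * Real.cosh (κ * r)
      + κ * (lam₁ + lam₂) * Real.sinh (κ * r) * a) := by
  have hs1 : 0 < Real.sinh (κ * R₁) := Real.sinh_pos_iff.2 (by positivity)
  have hs2 : 0 < Real.sinh (κ * R₂) := Real.sinh_pos_iff.2 (mul_pos hκ (hR₁.trans_le hR))
  have hsr : 0 < Real.sinh (κ * r) := Real.sinh_pos_iff.2 (mul_pos hκ (hR₁.trans_le hr))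
  have hcr : 0 < Real.cosh (κ * r) := Real.cosh_pos _
  have hμ0 : 0 ≤ μ := by rw [hμ]; positivity
  have ha0 : 0 < a := lt_of_lt_of_le (div_pos hs1 hs2) ha₁
  have hφ1 : φ ≤ 1 := (abs_le.1 hφ).2
  have hd1 : d ≤ μ * κ * a := (abs_le.1 hd).2
  have hsub : 0 ≤ Real.sinh (κ * r - κ * R₁) :=
    Real.sinh_nonneg_iff.2 (by nlinarith)
  rw [Real.sinh_sub] at hsub
  have hcoth : Real.cosh (κ * r) * Real.sinh (κ * R₁)
      ≤ Real.cosh (κ * R₁) * Real.sinh (κ * r) := by nlinarith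
  have hsle : Real.sinh (κ * r) ≤ Real.cosh (κ * r) := (Real.sinh_lt_cosh _).le
  have hα1 : 1 ≤ α := by
    rw [hα]
    have : 1 ≤ Real.cosh (κ * R₁) / Real.sinh (κ * R₁) :=
      (le_div_iff₀ hs1).2 (by simpa using (Real.sinh_lt_cosh (κ * R₁)).le)
    linarith
  -- term 1
  have hT1 : lam₁ * lam₂ * φ * Real.sinh (κ * r)
      ≤ α * (lam₁ * lam₂ * Real.cosh (κ * r)) := by
    have h1 : φ * Real.sinh (κ * r) ≤ α * Real.cosh (κ * r) := by
      calc φ * Real.sinh (κ * r) ≤ 1 * Real.sinh (κ * r) :=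
            mul_le_mul_of_nonneg_right hφ1 hsr.le
        _ ≤ 1 * Real.cosh (κ * r) := by linarith
        _ ≤ α * Real.cosh (κ * r) := mul_le_mul_of_nonneg_right hα1 hcr.le
    have := mul_le_mul_of_nonneg_left h1 (mul_pos hl₁ hl₂).le
    linarith
  -- term 2
  have hT2 : φ * Real.cosh (κ * r) * a + κ⁻¹ * Real.sinh (κ * r) * d
      ≤ α * Real.sinh (κ * r) * a := by
    have h2 : φ * Real.cosh (κ * r) * a ≤ Real.cosh (κ * r) * a := by
      have := mul_le_mul_of_nonneg_right
        (mul_le_mul_of_nonneg_right hφ1 hcr.le) ha0.le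
      linarith
    have h3 : κ⁻¹ * Real.sinh (κ * r) * d ≤ μ * Real.sinh (κ * r) * a := by
      have h := mul_le_mul_of_nonneg_left hd1
        (by positivity : (0:ℝ) ≤ κ⁻¹ * Real.sinh (κ * r))
      have heq : κ⁻¹ * Real.sinh (κ * r) * (μ * κ * a)
          = μ * Real.sinh (κ * r) * a := by
        field_simp
      linarith [h, heq.le]
    have h4 : Real.cosh (κ * r) * a
        ≤ (Real.cosh (κ * R₁) / Real.sinh (κ * R₁)) * Real.sinh (κ * r) * a := by
      have hc : Real.cosh (κ * r)
          ≤ (Real.cosh (κ * R₁) / Real.sinh (κ * R₁)) * Real.sinh (κ * r) := by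
        rw [div_mul_eq_mul_div, le_div_iff₀ hs1]
        linarith
      exact mul_le_mul_of_nonneg_right hc ha0.le
    rw [hα]
    have heq : (Real.cosh (κ * R₁) / Real.sinh (κ * R₁) + μ) * Real.sinh (κ * r) * a
        = (Real.cosh (κ * R₁) / Real.sinh (κ * R₁)) * Real.sinh (κ * r) * a
          + μ * Real.sinh (κ * r) * a := by ring
    rw [heq]
    linarith
  have hpos : 0 ≤ κ * (lam₁ + lam₂) := by positivity
  have hfin := mul_le_mul_of_nonneg_left hT2 hpos
  have heq2 : α * (lam₁ * lam₂ * Real.cosh (κ * r)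
      + κ * (lam₁ + lam₂) * Real.sinh (κ * r) * a)
      = α * (lam₁ * lam₂ * Real.cosh (κ * r))
        + κ * (lam₁ + lam₂) * (α * Real.sinh (κ * r) * a) := by ring
  rw [heq2]
  linarith
end
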